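/- arXiv:math-ph/0504069 — 6 statements merged into one kernel-verified Lean document; each statement's English description precedes it below -/
import Mathlib

section
/- Let h, r be unit vectors in ℝ³ (viewed as pure quaternions) with r ≠ −h. Set q₁ = (1 − r h)/‖1 − r h‖ and q₂ = (h + r)/‖h + r‖ in the quaternions. Then q₁ and q₂ are orthogonal unit quaternions, and for every t ∈ [0, 2π), the quaternion q(t) = q₁ cos t + q₂ sin t satisfies q(t) h q(t)* = r. -/
open scoped Quaternion RealInnerProductSpace

/-- For unit pure quaternions `h, r` with `r ≠ -h`, the quaternions
`q₁ = (1 - r h)/‖1 - r h‖` and `q₂ = (h + r)/‖h + r‖` are orthogonal unit quaternions,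
and every point `q(t) = q₁ cos t + q₂ sin t` of the great circle they span satisfies
`q(t) h q(t)* = r`. -/
theorem great_circle_fibre (h r : ℍ[ℝ])
    (hh : h.re = 0) (hr : r.re = 0) (hhn : ‖h‖ = 1) (hrn : ‖r‖ = 1) (hne : r ≠ -h) :
    let q₁ : ℍ[ℝ] := ‖1 - r * h‖⁻¹ • (1 - r * h)
    let q₂ : ℍ[ℝ] := ‖h + r‖⁻¹ • (h + r)
    ‖q₁‖ = 1 ∧ ‖q₂‖ = 1 ∧ ⟪q₁, q₂⟫ = 0 ∧
    ∀ t : ℝ, (Real.cos t • q₁ + Real.sin t • q₂) * h *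
        star (Real.cos t • q₁ + Real.sin t • q₂) = r := by
  intro q₁ q₂
  -- star of pure quaternions
  have hsh : star h = -h := by ext <;> simp [hh]
  have hsr : star r = -r := by ext <;> simp [hr]
  -- squares
  have hh2 : h * h = -1 := by
    have e := Quaternion.self_mul_star h
    rw [hsh, Quaternion.normSq_eq_norm_mul_self, hhn, mul_one, mul_neg] at e
    rw [← neg_neg (h * h), e]; norm_num
  have hr2 : r * r = -1 := by
    have e := Quaternion.self_mul_star r
    rw [hsr, Quaternion.normSq_eq_norm_mul_self, hrn, mul_one, mul_neg] at e
    rw [← neg_neg (r * r), e]; norm_num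
  -- key products
  have key1 : (1 - r * h) * h = h + r := by
    rw [sub_mul, one_mul, mul_assoc, hh2]; noncomm_ring
  have keyr1 : r * (1 - r * h) = h + r := by
    rw [mul_sub, mul_one, ← mul_assoc, hr2]; noncomm_ring
  have key2 : (h + r) * h = -(1 - r * h) := by
    rw [add_mul, hh2]; noncomm_ring
  have keyr2 : r * (h + r) = -(1 - r * h) := by
    rw [mul_add, hr2]; noncomm_ring
  -- nonvanishing
  have hhr0 : h + r ≠ 0 := fun e => hne (by rw [eq_neg_of_add_eq_zero_right e])
  have h1rh0 : 1 - r * h ≠ 0 := by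
    intro e
    apply hhr0
    rw [← key1, e, zero_mul]
  have hn0 : ‖1 - r * h‖ ≠ 0 := norm_ne_zero_iff.mpr h1rh0
  have hm0 : ‖h + r‖ ≠ 0 := norm_ne_zero_iff.mpr hhr0
  -- (r h r) is a pure quaternion
  have hrhr : (r * h * r).re = 0 := by
    have hst : star (r * h * r) = -(r * h * r) := by
      rw [star_mul, star_mul, hsh, hsr]; noncomm_ring
    have h2 := congrArg QuaternionAlgebra.re hst
    rw [Quaternion.re_star, Quaternion.re_neg] at h2
    linarith
  -- unit norms
  have hq1n : ‖q₁‖ = 1 := by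
    show ‖‖1 - r * h‖⁻¹ • (1 - r * h)‖ = 1
    rw [norm_smul, norm_inv, norm_norm, inv_mul_cancel₀ hn0]
  have hq2n : ‖q₂‖ = 1 := by
    show ‖‖h + r‖⁻¹ • (h + r)‖ = 1
    rw [norm_smul, norm_inv, norm_norm, inv_mul_cancel₀ hm0]
  -- orthogonality
  have hinner : ⟪q₁, q₂⟫ = 0 := by
    have base : ⟪(1 : ℍ[ℝ]) - r * h, h + r⟫ = 0 := by
      rw [Quaternion.inner_def]
      have e : (1 - r * h) * star (h + r) = -(h + r) - r + r * h * r := by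
        rw [star_add, hsh, hsr, ← neg_add, mul_neg, mul_add, key1, sub_mul, one_mul,
          mul_assoc r h r]
        noncomm_ring
      rw [e]
      simp [hh, hr, Quaternion.re_add, hrhr]
    show ⟪(‖1 - r * h‖⁻¹ • (1 - r * h) : ℍ[ℝ]), ‖h + r‖⁻¹ • (h + r)⟫ = 0
    rw [real_inner_smul_left, real_inner_smul_right, base]
    ring
  -- the eigen-equations q₁ h = r q₁ and q₂ h = r q₂
  have e1 : q₁ * h = r * q₁ := by
    show (‖1 - r * h‖⁻¹ • (1 - r * h)) * h = r * (‖1 - r * h‖⁻¹ • (1 - r * h))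
    rw [smul_mul_assoc, mul_smul_comm, key1, keyr1]
  have e2 : q₂ * h = r * q₂ := by
    show (‖h + r‖⁻¹ • (h + r)) * h = r * (‖h + r‖⁻¹ • (h + r))
    rw [smul_mul_assoc, mul_smul_comm, key2, keyr2]
  clear_value q₁ q₂
  refine ⟨hq1n, hq2n, hinner, fun t => ?_⟩
  set q : ℍ[ℝ] := Real.cos t • q₁ + Real.sin t • q₂ with hq
  have hqh : q * h = r * q := by
    rw [hq, add_mul, mul_add, smul_mul_assoc, smul_mul_assoc, e1, e2,
      mul_smul_comm, mul_smul_comm]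
  have a1 : ‖Real.cos t • q₁‖ = |Real.cos t| := by
    rw [norm_smul, hq1n, mul_one, Real.norm_eq_abs]
  have a2 : ‖Real.sin t • q₂‖ = |Real.sin t| := by
    rw [norm_smul, hq2n, mul_one, Real.norm_eq_abs]
  have hqn : ‖q‖ = 1 := by
    have hsq : ‖q‖ ^ 2 = 1 := by
      rw [hq, norm_add_sq_real, a1, a2, real_inner_smul_left, real_inner_smul_right, hinner]
      nlinarith [Real.sin_sq_add_cos_sq t, sq_abs (Real.cos t), sq_abs (Real.sin t)]
    nlinarith [norm_nonneg q]
  have hqs : q * star q = 1 := by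
    rw [Quaternion.self_mul_star, Quaternion.normSq_eq_norm_mul_self, hqn]
    norm_num
  rw [hqh, mul_assoc, hqs, mul_one]
end

section
/- Let h, r ∈ S² be unit vectors and C ⊂ S³ the great circle of unit quaternions q satisfying q h q* = r. Then for any unit quaternion p, the distance of p to C satisfies cos(2 d(p, C)) = ⟨p h p*, r⟩, i.e. d(p, C) = (1/2) arccos(p h p* · r). -/
open scoped Quaternion RealInnerProductSpace

private lemma quat_mul_re_comm (x y : ℍ[ℝ]) : (x * y).re = (y * x).re := by
  simp only [Quaternion.re_mul]; ring

private lemma quat_inner_coords (a b : ℍ[ℝ]) :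
    ⟪a, b⟫ = a.re * b.re + a.imI * b.imI + a.imJ * b.imJ + a.imK * b.imK := by
  simp only [Quaternion.inner_def, Quaternion.re_mul, Quaternion.re_star,
    Quaternion.imI_star, Quaternion.imJ_star, Quaternion.imK_star]
  ring

private lemma quat_coords_norm (a : ℍ[ℝ]) :
    a.re ^ 2 + a.imI ^ 2 + a.imJ ^ 2 + a.imK ^ 2 = ‖a‖ ^ 2 := by
  have h2 : ‖a‖ ^ 2 = Quaternion.normSq a := by
    rw [Quaternion.normSq_eq_norm_mul_self]; ring
  rw [h2, Quaternion.normSq_def']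

private lemma quat_unit_mul_star {q : ℍ[ℝ]} (hq : ‖q‖ = 1) : q * star q = 1 := by
  rw [Quaternion.self_mul_star, Quaternion.normSq_eq_norm_mul_self, hq]
  norm_num

private lemma quat_unit_star_mul {q : ℍ[ℝ]} (hq : ‖q‖ = 1) : star q * q = 1 := by
  rw [Quaternion.star_mul_self, Quaternion.normSq_eq_norm_mul_self, hq]
  norm_num

private lemma quat_inner_mul_left (a b c : ℍ[ℝ]) : ⟪a, b * c⟫ = ⟪star b * a, c⟫ := by
  simp only [Quaternion.inner_def, star_mul]
  rw [← mul_assoc, quat_mul_re_comm, ← mul_assoc]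

private lemma quat_inner_conj (q x y : ℍ[ℝ]) (hq : ‖q‖ = 1) :
    ⟪q * x * star q, q * y * star q⟫ = ⟪x, y⟫ := by
  have h1 : star q * q = 1 := quat_unit_star_mul hq
  simp only [Quaternion.inner_def, star_mul, star_star]
  have e : q * x * star q * (q * (star y * star q)) =
      q * (x * (star q * q * (star y * star q))) := by
    simp only [mul_assoc]
  rw [e, h1, one_mul, quat_mul_re_comm]
  have e2 : x * (star y * star q) * q = x * star y * (star q * q) := by
    simp only [mul_assoc]
  rw [e2, h1, mul_one]

private lemma quat_conj_q1 (h r : ℍ[ℝ]) (hh : h.re = 0) (hr : r.re = 0)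
    (hh2 : h.imI ^ 2 + h.imJ ^ 2 + h.imK ^ 2 = 1)
    (hr2 : r.imI ^ 2 + r.imJ ^ 2 + r.imK ^ 2 = 1) :
    (1 - r * h) * h * star (1 - r * h) =
      (2 + 2 * (h.imI * r.imI + h.imJ * r.imJ + h.imK * r.imK)) • r := by
  ext
  · simp only [Quaternion.re_mul, Quaternion.imI_mul, Quaternion.imJ_mul, Quaternion.imK_mul,
      Quaternion.re_star, Quaternion.imI_star, Quaternion.imJ_star, Quaternion.imK_star,
      Quaternion.re_sub, Quaternion.imI_sub, Quaternion.imJ_sub, Quaternion.imK_sub,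
      Quaternion.re_one, Quaternion.imI_one, Quaternion.imJ_one, Quaternion.imK_one,
      Quaternion.re_smul, smul_eq_mul, hh, hr]
    ring
  · simp only [Quaternion.re_mul, Quaternion.imI_mul, Quaternion.imJ_mul, Quaternion.imK_mul,
      Quaternion.re_star, Quaternion.imI_star, Quaternion.imJ_star, Quaternion.imK_star,
      Quaternion.re_sub, Quaternion.imI_sub, Quaternion.imJ_sub, Quaternion.imK_sub,
      Quaternion.re_one, Quaternion.imI_one, Quaternion.imJ_one, Quaternion.imK_one,
      Quaternion.imI_smul, smul_eq_mul, hh, hr]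
    linear_combination (2 * r.imI + 2 * h.imK * r.imI * r.imK + 2 * h.imJ * r.imI * r.imJ
      - h.imI * r.imK ^ 2 - h.imI * r.imJ ^ 2 + h.imI * r.imI ^ 2) * hh2 + (- h.imI) * hr2
  · simp only [Quaternion.re_mul, Quaternion.imI_mul, Quaternion.imJ_mul, Quaternion.imK_mul,
      Quaternion.re_star, Quaternion.imI_star, Quaternion.imJ_star, Quaternion.imK_star,
      Quaternion.re_sub, Quaternion.imI_sub, Quaternion.imJ_sub, Quaternion.imK_sub,
      Quaternion.re_one, Quaternion.imI_one, Quaternion.imJ_one, Quaternion.imK_one,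
      Quaternion.imJ_smul, smul_eq_mul, hh, hr]
    linear_combination (2 * r.imJ + 2 * h.imK * r.imJ * r.imK - h.imJ * r.imK ^ 2
      + h.imJ * r.imJ ^ 2 - h.imJ * r.imI ^ 2 + 2 * h.imI * r.imI * r.imJ) * hh2
      + (- h.imJ) * hr2
  · simp only [Quaternion.re_mul, Quaternion.imI_mul, Quaternion.imJ_mul, Quaternion.imK_mul,
      Quaternion.re_star, Quaternion.imI_star, Quaternion.imJ_star, Quaternion.imK_star,
      Quaternion.re_sub, Quaternion.imI_sub, Quaternion.imJ_sub, Quaternion.imK_sub,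
      Quaternion.re_one, Quaternion.imI_one, Quaternion.imJ_one, Quaternion.imK_one,
      Quaternion.imK_smul, smul_eq_mul, hh, hr]
    linear_combination (2 * r.imK + h.imK * r.imK ^ 2 - h.imK * r.imJ ^ 2 - h.imK * r.imI ^ 2
      + 2 * h.imJ * r.imJ * r.imK + 2 * h.imI * r.imI * r.imK) * hh2 + (- h.imK) * hr2

private lemma quat_key_inner (h w : ℍ[ℝ]) (hh : h.re = 0)
    (hh2 : h.imI ^ 2 + h.imJ ^ 2 + h.imK ^ 2 = 1)
    (hw2 : w.re ^ 2 + w.imI ^ 2 + w.imJ ^ 2 + w.imK ^ 2 = 1) :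
    ⟪w * h * star w, h⟫ = 2 * w.re ^ 2 + 2 * ⟪w, h⟫ ^ 2 - 1 := by
  rw [quat_inner_coords, quat_inner_coords]
  simp only [Quaternion.re_mul, Quaternion.imI_mul, Quaternion.imJ_mul, Quaternion.imK_mul,
    Quaternion.re_star, Quaternion.imI_star, Quaternion.imJ_star, Quaternion.imK_star, hh]
  linear_combination (w.re ^ 2 - w.imI ^ 2 - w.imJ ^ 2 - w.imK ^ 2) * hh2 - hw2

private lemma quat_commute_struct (h u : ℍ[ℝ]) (hh : h.re = 0)
    (hh2 : h.imI ^ 2 + h.imJ ^ 2 + h.imK ^ 2 = 1) (hc : u * h = h * u) :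
    u.imI = (u.imI * h.imI + u.imJ * h.imJ + u.imK * h.imK) * h.imI ∧
    u.imJ = (u.imI * h.imI + u.imJ * h.imJ + u.imK * h.imK) * h.imJ ∧
    u.imK = (u.imI * h.imI + u.imJ * h.imJ + u.imK * h.imK) * h.imK := by
  have e1 := congrArg QuaternionAlgebra.imI hc
  have e2 := congrArg QuaternionAlgebra.imJ hc
  have e3 := congrArg QuaternionAlgebra.imK hc
  simp only [Quaternion.imI_mul, Quaternion.imJ_mul, Quaternion.imK_mul, hh] at e1 e2 e3
  refine ⟨?_, ?_, ?_⟩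
  · linear_combination (- u.imI) * hh2 + (h.imJ / 2) * e3 - (h.imK / 2) * e2
  · linear_combination (- u.imJ) * hh2 - (h.imI / 2) * e3 + (h.imK / 2) * e1
  · linear_combination (- u.imK) * hh2 + (h.imI / 2) * e2 - (h.imJ / 2) * e1

set_option maxHeartbeats 1000000 in
/-- For unit pure quaternions `h, r` with `r ≠ -h`, let `C ⊂ S³` be the great circle of
unit quaternions `q` with `q h q* = r`.  Then for any unit quaternion `p`, the geodesic
distance of `p` to `C` satisfies `cos (2 d(p,C)) = ⟪p h p*, r⟫`, i.e.
`d(p,C) = (1/2) arccos (p h p* · r)`. -/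
theorem dist_to_fibre_circle (h r : ℍ[ℝ])
    (hh : h.re = 0) (hr : r.re = 0) (hhn : ‖h‖ = 1) (hrn : ‖r‖ = 1) (hne : r ≠ -h)
    (p : ℍ[ℝ]) (hp : ‖p‖ = 1) :
    sInf ((fun q : ℍ[ℝ] => Real.arccos ⟪p, q⟫) ''
        {q : ℍ[ℝ] | ‖q‖ = 1 ∧ q * h * star q = r}) =
      (1 / 2) * Real.arccos ⟪p * h * star p, r⟫ := by
  have hh2 : h.imI ^ 2 + h.imJ ^ 2 + h.imK ^ 2 = 1 := by
    have := quat_coords_norm h; rw [hh, hhn] at this; norm_num at this; linarith [this]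
  have hr2 : r.imI ^ 2 + r.imJ ^ 2 + r.imK ^ 2 = 1 := by
    have := quat_coords_norm r; rw [hr, hrn] at this; norm_num at this; linarith [this]
  obtain ⟨c, hcdef⟩ : ∃ c : ℝ, c = h.imI * r.imI + h.imJ * r.imJ + h.imK * r.imK := ⟨_, rfl⟩
  -- positivity of 2 + 2c
  have hcgt : 0 < 2 + 2 * c := by
    have hne' : r + h ≠ 0 := by
      intro hx; exact hne (eq_neg_of_add_eq_zero_left hx)
    have h0 : (0 : ℝ) < ‖r + h‖ ^ 2 :=
      pow_pos (norm_pos_iff.mpr hne') 2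
    rw [← quat_coords_norm] at h0
    simp only [Quaternion.re_add, Quaternion.imI_add, Quaternion.imJ_add, Quaternion.imK_add,
      hh, hr] at h0
    rw [hcdef]
    have e : ((0 : ℝ) + 0) ^ 2 + (r.imI + h.imI) ^ 2 + (r.imJ + h.imJ) ^ 2 +
        (r.imK + h.imK) ^ 2
        = 2 + 2 * (h.imI * r.imI + h.imJ * r.imJ + h.imK * r.imK) := by
      linear_combination hh2 + hr2
    linarith [h0, e]
  -- the base point q₀ on the circle
  obtain ⟨q1, hq1def⟩ : ∃ q1 : ℍ[ℝ], q1 = 1 - r * h := ⟨_, rfl⟩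
  have hq1n : ‖q1‖ ^ 2 = 2 + 2 * c := by
    rw [← quat_coords_norm, hcdef]
    simp only [hq1def, Quaternion.re_sub, Quaternion.imI_sub, Quaternion.imJ_sub,
      Quaternion.imK_sub, Quaternion.re_one, Quaternion.imI_one, Quaternion.imJ_one,
      Quaternion.imK_one, Quaternion.re_mul, Quaternion.imI_mul, Quaternion.imJ_mul,
      Quaternion.imK_mul, hh, hr]
    linear_combination (r.imI ^ 2 + r.imJ ^ 2 + r.imK ^ 2) * hh2 + hr2
  have hq1pos : (0 : ℝ) < ‖q1‖ := by
    by_contra hcon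
    push_neg at hcon
    have : ‖q1‖ = 0 := le_antisymm hcon (norm_nonneg _)
    rw [this] at hq1n; norm_num at hq1n; linarith
  obtain ⟨q₀, hq0def⟩ : ∃ q₀ : ℍ[ℝ], q₀ = (‖q1‖)⁻¹ • q1 := ⟨_, rfl⟩
  have hq0n : ‖q₀‖ = 1 := by
    rw [hq0def, norm_smul, norm_inv, norm_norm, inv_mul_cancel₀ (ne_of_gt hq1pos)]
  have hq0r : q₀ * h * star q₀ = r := by
    have hconj : q1 * h * star q1 = (2 + 2 * c) • r := by
      rw [hq1def, hcdef]; exact quat_conj_q1 h r hh hr hh2 hr2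
    rw [hq0def]
    have hstar : star ((‖q1‖)⁻¹ • q1) = (‖q1‖)⁻¹ • star q1 := by
      simp [star_smul]
    rw [hstar, smul_mul_assoc, smul_mul_assoc, mul_smul_comm, smul_smul, hconj, smul_smul]
    have hone : (‖q1‖)⁻¹ * (‖q1‖)⁻¹ * (2 + 2 * c) = 1 := by
      have e : (‖q1‖)⁻¹ * (‖q1‖)⁻¹ = (‖q1‖ ^ 2)⁻¹ := by
        rw [pow_two, mul_inv]
      rw [e, hq1n]
      field_simp
      exact div_self (by linarith)
    rw [hone, one_smul]
  -- w, a, b, s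
  obtain ⟨w, hwdef⟩ : ∃ w : ℍ[ℝ], w = star q₀ * p := ⟨_, rfl⟩
  have hwn : ‖w‖ = 1 := by
    rw [hwdef, norm_mul, Quaternion.norm_star, hq0n, hp, one_mul]
  have hw2 : w.re ^ 2 + w.imI ^ 2 + w.imJ ^ 2 + w.imK ^ 2 = 1 := by
    rw [quat_coords_norm, hwn, one_pow]
  have hpw : q₀ * w = p := by
    rw [hwdef, ← mul_assoc, quat_unit_mul_star hq0n, one_mul]
  obtain ⟨a, hadef⟩ : ∃ a : ℝ, a = w.re := ⟨_, rfl⟩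
  obtain ⟨b, hbdef⟩ : ∃ b : ℝ, b = w.imI * h.imI + w.imJ * h.imJ + w.imK * h.imK := ⟨_, rfl⟩
  have hbinner : ⟪w, h⟫ = b := by
    rw [quat_inner_coords, hh, hbdef]; ring
  obtain ⟨s, hsdef⟩ : ∃ s : ℝ, s = Real.sqrt (a ^ 2 + b ^ 2) := ⟨_, rfl⟩
  have hs0 : 0 ≤ s := hsdef ▸ Real.sqrt_nonneg _
  have hs2 : s ^ 2 = a ^ 2 + b ^ 2 := by
    rw [hsdef]; exact Real.sq_sqrt (by positivity)
  have hb2 : b ^ 2 ≤ w.imI ^ 2 + w.imJ ^ 2 + w.imK ^ 2 := by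
    have lag : b ^ 2 + ((w.imI * h.imJ - w.imJ * h.imI) ^ 2 +
        (w.imI * h.imK - w.imK * h.imI) ^ 2 + (w.imJ * h.imK - w.imK * h.imJ) ^ 2) =
        (w.imI ^ 2 + w.imJ ^ 2 + w.imK ^ 2) * (h.imI ^ 2 + h.imJ ^ 2 + h.imK ^ 2) := by
      rw [hbdef]; ring
    rw [hh2, mul_one] at lag
    linarith [lag, sq_nonneg (w.imI * h.imJ - w.imJ * h.imI),
      sq_nonneg (w.imI * h.imK - w.imK * h.imI), sq_nonneg (w.imJ * h.imK - w.imK * h.imJ)]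
  have hab1 : a ^ 2 + b ^ 2 ≤ 1 := by
    rw [hadef]; linarith [hw2, hb2]
  have hs1 : s ≤ 1 := by
    rw [hsdef]; exact Real.sqrt_le_one.mpr (by linarith)
  -- upper bound for the inner product on the circle
  have hub : ∀ q : ℍ[ℝ], ‖q‖ = 1 → q * h * star q = r → ⟪p, q⟫ ≤ s := by
    intro q hqn hqr
    obtain ⟨u, hudef⟩ : ∃ u : ℍ[ℝ], u = star q₀ * q := ⟨_, rfl⟩
    have hqu : q₀ * u = q := by
      rw [hudef, ← mul_assoc, quat_unit_mul_star hq0n, one_mul]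
    have hun : ‖u‖ = 1 := by
      rw [hudef, norm_mul, Quaternion.norm_star, hq0n, hqn, one_mul]
    have hqh : q * h = r * q := by
      have e : q * h * star q * q = r * q := by rw [hqr]
      simp only [mul_assoc, quat_unit_star_mul hqn, mul_one] at e
      exact e
    have hq0h : star q₀ * r = h * star q₀ := by
      have e : star q₀ * (q₀ * h * star q₀) = star q₀ * r := by rw [hq0r]
      simp only [← mul_assoc, quat_unit_star_mul hq0n, one_mul] at e
      exact e.symm
    have hcomm : u * h = h * u := by
      rw [hudef, mul_assoc, hqh, ← mul_assoc, hq0h, mul_assoc]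
    obtain ⟨hu1, hu2, hu3⟩ := quat_commute_struct h u hh hh2 hcomm
    obtain ⟨t, htdef⟩ : ∃ t : ℝ, t = u.imI * h.imI + u.imJ * h.imJ + u.imK * h.imK := ⟨_, rfl⟩
    rw [← htdef] at hu1 hu2 hu3
    have hu2n : u.re ^ 2 + u.imI ^ 2 + u.imJ ^ 2 + u.imK ^ 2 = 1 := by
      rw [quat_coords_norm, hun, one_pow]
    have hxt : u.re ^ 2 + t ^ 2 = 1 := by
      have ht2 : t ^ 2 = u.imI ^ 2 + u.imJ ^ 2 + u.imK ^ 2 := by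
        linear_combination (- u.imI - t * h.imI) * hu1 + (- u.imJ - t * h.imJ) * hu2 +
          (- u.imK - t * h.imK) * hu3 - t ^ 2 * hh2
      linarith [hu2n, ht2]
    have hval : ⟪p, q⟫ = a * u.re + b * t := by
      rw [← hqu, quat_inner_mul_left, ← hwdef, quat_inner_coords]
      rw [hadef, hbdef]
      linear_combination w.imI * hu1 + w.imJ * hu2 + w.imK * hu3
    rw [hval]
    have hX2 : (a * u.re + b * t) ^ 2 + (a * t - b * u.re) ^ 2 = s ^ 2 := by
      linear_combination (a ^ 2 + b ^ 2) * hxt - hs2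
    calc a * u.re + b * t ≤ |a * u.re + b * t| := le_abs_self _
      _ = Real.sqrt ((a * u.re + b * t) ^ 2) := (Real.sqrt_sq_eq_abs _).symm
      _ ≤ Real.sqrt (a ^ 2 + b ^ 2) := by
          apply Real.sqrt_le_sqrt
          have := sq_nonneg (a * t - b * u.re)
          linarith [hX2, hs2]
      _ = s := hsdef.symm
  -- the value s is attained
  have hmem : ∃ q : ℍ[ℝ], (‖q‖ = 1 ∧ q * h * star q = r) ∧ ⟪p, q⟫ = s := by
    by_cases hs : s = 0
    · refine ⟨q₀, ⟨hq0n, hq0r⟩, ?_⟩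
      have ha0 : a = 0 := by
        have e : a ^ 2 + b ^ 2 = 0 := by rw [← hs2, hs]; ring
        have ha2 : a ^ 2 = 0 := by linarith [sq_nonneg a, sq_nonneg b]
        exact pow_eq_zero_iff (two_ne_zero) |>.mp ha2
      have e1 : ⟪p, q₀⟫ = a := by
        have e : ⟪p, q₀ * 1⟫ = ⟪w, 1⟫ := by rw [quat_inner_mul_left, ← hwdef]
        rw [mul_one] at e
        rw [e, quat_inner_coords]
        simp [hadef]
      rw [e1, ha0, hs]
    · have hspos : 0 < s := lt_of_le_of_ne hs0 (Ne.symm hs)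
      obtain ⟨u, hudef⟩ : ∃ u : ℍ[ℝ], u = (a / s) • (1 : ℍ[ℝ]) + (b / s) • h := ⟨_, rfl⟩
      have hure : u.re = a / s := by simp [hudef, hh]
      have huI : u.imI = (b / s) * h.imI := by simp [hudef]
      have huJ : u.imJ = (b / s) * h.imJ := by simp [hudef]
      have huK : u.imK = (b / s) * h.imK := by simp [hudef]
      have hun : ‖u‖ = 1 := by
        have h2 : ‖u‖ ^ 2 = 1 := by
          rw [← quat_coords_norm, hure, huI, huJ, huK]
          have e : a ^ 2 / s ^ 2 + b ^ 2 / s ^ 2 = 1 := by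
            rw [← add_div, ← hs2]
            field_simp
          linear_combination (b / s) ^ 2 * hh2 + e
        have e2 : ‖u‖ = Real.sqrt (‖u‖ ^ 2) := (Real.sqrt_sq (norm_nonneg u)).symm
        rw [e2, h2, Real.sqrt_one]
      have hcomm : u * h = h * u := by
        rw [hudef, add_mul, mul_add, smul_mul_assoc, mul_smul_comm, smul_mul_assoc,
          mul_smul_comm, one_mul, mul_one]
      have huh : u * h * star u = h := by
        rw [hcomm, mul_assoc, quat_unit_mul_star hun, mul_one]
      refine ⟨q₀ * u, ⟨?_, ?_⟩, ?_⟩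
      · rw [norm_mul, hq0n, hun, one_mul]
      · have e : q₀ * u * h * star (q₀ * u) = q₀ * (u * h * star u) * star q₀ := by
          rw [star_mul]
          simp only [mul_assoc]
        rw [e, huh, hq0r]
      · rw [quat_inner_mul_left, ← hwdef, quat_inner_coords, hure, huI, huJ, huK]
        have e : w.re * (a / s) + w.imI * (b / s * h.imI) + w.imJ * (b / s * h.imJ) +
            w.imK * (b / s * h.imK) = (a ^ 2 + b ^ 2) / s := by
          rw [hadef, hbdef]; field_simp; ring
        rw [e, ← hs2, pow_two, mul_div_assoc, div_self hs, mul_one]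
  -- the infimum is arccos s
  have hleast : IsLeast ((fun q : ℍ[ℝ] => Real.arccos ⟪p, q⟫) ''
      {q : ℍ[ℝ] | ‖q‖ = 1 ∧ q * h * star q = r}) (Real.arccos s) := by
    constructor
    · obtain ⟨q, hq, hv⟩ := hmem
      refine ⟨q, hq, ?_⟩
      show Real.arccos ⟪p, q⟫ = Real.arccos s
      rw [hv]
    · rintro y ⟨q, ⟨hqn, hqr⟩, rfl⟩
      have hle : ⟪p, q⟫ ≤ s := hub q hqn hqr
      simp only [Real.arccos]
      have harcsin : Real.arcsin ⟪p, q⟫ ≤ Real.arcsin s := Real.monotone_arcsin hle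
      linarith
  rw [hleast.csInf_eq]
  -- identify the right-hand side
  have hval : ⟪p * h * star p, r⟫ = 2 * s ^ 2 - 1 := by
    have hphp : p * h * star p = q₀ * (w * h * star w) * star q₀ := by
      rw [← hpw, star_mul]
      simp only [mul_assoc]
    rw [hphp, ← hq0r, quat_inner_conj _ _ _ hq0n, quat_key_inner h w hh hh2 hw2, hbinner,
      hs2, hadef]
    ring
  rw [hval]
  have harc : Real.arccos (2 * s ^ 2 - 1) = 2 * Real.arccos s := by
    have hcos : 2 * s ^ 2 - 1 = Real.cos (2 * Real.arccos s) := by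
      rw [Real.cos_two_mul, Real.cos_arccos (by linarith) hs1]
    rw [hcos, Real.arccos_cos]
    · have := Real.arccos_nonneg s
      linarith
    · have hhalf : Real.arccos s ≤ Real.pi / 2 := Real.arccos_le_pi_div_two.mpr hs0
      linarith
  rw [harc]
  ring
end

section
/- Let q₁, q₂ be orthogonal unit quaternions determined by unit vectors h, r ∈ S² via q₁ = (1 − rh)/‖1 − rh‖, q₂ = (h + r)/‖h + r‖, and let q(t) = q₁ cos t + q₂ sin t. Then the scalar part of q(t) equals cos(η/2) cos t, where η = arccos(h · r) is the angle between h and r. -/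
open scoped Quaternion RealInnerProductSpace

/-- With `q₁ = (1 - rh)/‖1 - rh‖`, `q₂ = (h + r)/‖h + r‖` and
`q(t) = q₁ cos t + q₂ sin t`, the scalar part of `q(t)` equals `cos(η/2) cos t`, where
`η = arccos (h · r)` is the angle between `h` and `r`. -/
theorem scalar_part_on_fibre_circle (h r : ℍ[ℝ])
    (hh : h.re = 0) (hr : r.re = 0) (hhn : ‖h‖ = 1) (hrn : ‖r‖ = 1) (hne : r ≠ -h) :
    ∀ t : ℝ,
      (Real.cos t • (‖1 - r * h‖⁻¹ • (1 - r * h)) +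
        Real.sin t • (‖h + r‖⁻¹ • (h + r))).re =
      Real.cos (Real.arccos ⟪h, r⟫ / 2) * Real.cos t := by
  intro t
  set c : ℝ := ⟪h, r⟫ with hc
  have hb : |c| ≤ 1 := by
    have := abs_real_inner_le_norm h r
    rwa [hhn, hrn, mul_one] at this
  have hre : (r * h).re = -c := by
    simp only [hc, Quaternion.inner_def, Quaternion.re_mul, Quaternion.re_star,
      Quaternion.imI_star, Quaternion.imJ_star, Quaternion.imK_star, hh, hr]
    ring
  have hpos : (0 : ℝ) < 1 + c := by
    have h2 : ‖h + r‖ ^ 2 = 2 + 2 * c := by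
      rw [norm_add_sq_real, hhn, hrn, hc]; ring
    have hne0 : h + r ≠ 0 := by
      intro h0
      rw [add_comm] at h0
      exact hne (eq_neg_of_add_eq_zero_left h0)
    have : 0 < ‖h + r‖ ^ 2 := pow_pos (norm_pos_iff.mpr hne0) 2
    nlinarith
  have hnorm : ‖1 - r * h‖ = Real.sqrt (2 + 2 * c) := by
    have h2 : ‖1 - r * h‖ ^ 2 = 2 + 2 * c := by
      rw [norm_sub_sq_real]
      have h1 : ⟪(1 : ℍ[ℝ]), r * h⟫ = -c := by
        rw [Quaternion.inner_def, one_mul, Quaternion.re_star, hre]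
      rw [h1, norm_one, norm_mul, hhn, hrn]; ring
    rw [← h2, Real.sqrt_sq (norm_nonneg _)]
  have hcos : Real.cos (Real.arccos c / 2) = Real.sqrt ((1 + c) / 2) := by
    rw [Real.cos_half (by linarith [Real.arccos_nonneg c, Real.pi_pos])
        (Real.arccos_le_pi c),
      Real.cos_arccos (abs_le.mp hb).1 (abs_le.mp hb).2]
  have hs : (0 : ℝ) < Real.sqrt (2 + 2 * c) := Real.sqrt_pos.mpr (by linarith)
  have hmul : Real.sqrt ((1 + c) / 2) * Real.sqrt (2 + 2 * c) = 1 + c := by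
    rw [← Real.sqrt_mul (by linarith), show (1 + c) / 2 * (2 + 2 * c) = (1 + c) ^ 2 by ring,
      Real.sqrt_sq (by linarith)]
  have key : (Real.sqrt (2 + 2 * c))⁻¹ * (1 - -c) = Real.sqrt ((1 + c) / 2) := by
    rw [show (1 - -c : ℝ) = 1 + c by ring, inv_mul_eq_div, div_eq_iff hs.ne', hmul]
  simp only [Quaternion.re_add, Quaternion.re_smul, Quaternion.re_sub,
    Quaternion.re_one, hre, hh, hr, smul_eq_mul, add_zero, mul_zero]
  rw [hnorm, hcos, key]
  ring
end

section
/- Let C ⊂ S³ be the great circle of unit quaternions mapping h ∈ S² to r ∈ S² under conjugation. Then for any h' ∈ S² and any q(t) ∈ C, the inner product q(t) h' q(t)* · r equals h' · h. Consequently, as q ranges over C, the points q h' q* trace out the small circle on S² of center r and angular radius arccos(h · h'). -/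
set_option maxHeartbeats 1000000

open scoped Quaternion RealInnerProductSpace

namespace FibreCircleAux
open Quaternion

lemma re_mul_comm (a b : ℍ[ℝ]) : (a*b).re = (b*a).re := by
  simp only [Quaternion.re_mul]; ring

lemma normSq_one_of (h : ℍ[ℝ]) (hhn : ‖h‖ = 1) : normSq h = 1 := by
  rw [Quaternion.normSq_eq_norm_mul_self, hhn]; ring

lemma mul_self_pure (h : ℍ[ℝ]) (hh : h.re = 0) (hhn : ‖h‖ = 1) : h * h = -1 := by
  have h1 : star h = -h := Quaternion.star_eq_neg.mpr hh
  have h2 : star h * h = ((normSq h : ℝ) : ℍ[ℝ]) := Quaternion.star_mul_self h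
  rw [h1, normSq_one_of h hhn, neg_mul, neg_eq_iff_eq_neg] at h2
  simpa using h2

lemma star_mul_self' (q : ℍ[ℝ]) (hq : ‖q‖ = 1) : star q * q = 1 := by
  rw [Quaternion.star_mul_self, normSq_one_of q hq]; simp

lemma mul_star_self' (q : ℍ[ℝ]) (hq : ‖q‖ = 1) : q * star q = 1 := by
  rw [Quaternion.self_mul_star, normSq_one_of q hq]; simp

lemma pure_anticomm (p q : ℍ[ℝ]) (hp : p.re = 0) (hq : q.re = 0) :
    p * q + q * p = ((-2 * ⟪p,q⟫ : ℝ) : ℍ[ℝ]) := by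
  have hq' : star q = -q := Quaternion.star_eq_neg.mpr hq
  ext <;> simp [Quaternion.inner_def, Quaternion.re_mul, Quaternion.imI_mul,
    Quaternion.imJ_mul, Quaternion.imK_mul, hq', hp, hq] <;> ring

lemma conj_re (q a : ℍ[ℝ]) (hq : ‖q‖ = 1) : (q * a * star q).re = a.re := by
  rw [re_mul_comm, ← mul_assoc, star_mul_self' q hq, one_mul]

lemma conj_norm (q a : ℍ[ℝ]) (hq : ‖q‖ = 1) : ‖q * a * star q‖ = ‖a‖ := by
  simp [norm_mul, hq, norm_star]

lemma conj_inner (q a b : ℍ[ℝ]) (hq : ‖q‖ = 1) :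
    ⟪q * a * star q, q * b * star q⟫ = ⟪a, b⟫ := by
  rw [Quaternion.inner_def, Quaternion.inner_def]
  have hst : star (q * b * star q) = q * star b * star q := by
    simp [StarMul.star_mul, mul_assoc]
  rw [hst]
  have h1 := star_mul_self' q hq
  have key : ∀ x : ℍ[ℝ], star q * (q * x) = x := fun x => by
    rw [← mul_assoc, h1, one_mul]
  have : q * a * star q * (q * star b * star q) = q * (a * star b) * star q := by
    simp only [mul_assoc, key]
  rw [this, conj_re _ _ hq]

lemma commutant (h z : ℍ[ℝ]) (hh : h.re = 0) (hhn : ‖h‖ = 1) (hh2 : h * h = -1)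
    (hz : z * h = h * z) : ∃ a b : ℝ, z = a • (1:ℍ[ℝ]) + b • h := by
  refine ⟨z.re, ⟪z - z.re • 1, h⟫, ?_⟩
  set v := z - z.re • (1:ℍ[ℝ]) with hv
  set l := ⟪v, h⟫ with hl
  have hvre : v.re = 0 := by simp [hv]
  have hvh : v * h = h * v := by
    simp only [hv, sub_mul, mul_sub, smul_mul_assoc, mul_smul_comm, one_mul, mul_one, hz]
  set w := v - l • h with hw
  have hwre : w.re = 0 := by simp [hw, hvre, Quaternion.re_smul, hh]
  have hwh : w * h = h * w := by
    simp only [hw, sub_mul, mul_sub, smul_mul_assoc, mul_smul_comm, hvh]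
  have hinner : ⟪w, h⟫ = 0 := by
    have hhh : ⟪h, h⟫ = 1 := by
      rw [real_inner_self_eq_norm_sq, hhn]; norm_num
    rw [hw, inner_sub_left, real_inner_smul_left, hhh]
    ring
  have hanti := pure_anticomm w h hwre hh
  rw [hinner, hwh] at hanti
  have h2 : h * w = 0 := by
    have h0 : h * w + h * w = 0 := by
      rw [hanti, show (-2:ℝ)*0 = 0 by ring, Quaternion.coe_zero]
    have h2' : (2:ℝ) • (h * w) = 0 := by rw [two_smul]; exact h0
    rcases smul_eq_zero.mp h2' with h'|h'
    · norm_num at h'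
    · exact h'
  have hw0 : w = 0 := by
    have := congrArg (fun x => h * x) h2
    simpa [← mul_assoc, hh2] using this
  have : v = l • h := by rwa [hw, sub_eq_zero] at hw0
  rw [← this, hv]; abel

lemma rot_formula (h p : ℍ[ℝ]) (hh : h.re = 0) (hh2 : h*h = -1) (e1 : p*h = -(h*p)) (a b : ℝ) :
    (a • (1:ℍ[ℝ]) + b • h) * p * star (a • (1:ℍ[ℝ]) + b • h)
      = (a^2-b^2) • p + (2*(a*b)) • (h*p) := by
  have hs : star (a • (1:ℍ[ℝ]) + b • h) = a • (1:ℍ[ℝ]) - b • h := by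
    simp [Quaternion.star_eq_neg.mpr hh, sub_eq_add_neg]
  rw [hs]
  have hph : (h*p)*h = p := by
    rw [mul_assoc, e1, mul_neg, ← mul_assoc, hh2]; simp
  simp only [add_mul, mul_add, sub_mul, mul_sub, smul_mul_assoc, mul_smul_comm,
    one_mul, mul_one, e1, hph]
  module

lemma half_angle (α β : ℝ) (hab : α^2 + β^2 = 1) :
    ∃ a b : ℝ, a^2 + b^2 = 1 ∧ a^2 - b^2 = α ∧ 2*(a*b) = β := by
  have hα1 : -1 ≤ α := by nlinarith
  have hα2 : α ≤ 1 := by nlinarith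
  set θ := if 0 ≤ β then Real.arccos α else -(Real.arccos α) with hθ
  have hcos : Real.cos θ = α := by
    rw [hθ]; split_ifs <;> simp [Real.cos_arccos hα1 hα2]
  have hsin : Real.sin θ = β := by
    rw [hθ]; split_ifs with hb
    · rw [Real.sin_arccos, show 1 - α^2 = β^2 by linarith]
      exact Real.sqrt_sq hb
    · rw [Real.sin_neg, Real.sin_arccos, show 1 - α^2 = β^2 by linarith,
        Real.sqrt_sq_eq_abs, abs_of_neg (lt_of_not_ge hb)]
      ring
  have hpyth : Real.sin (θ/2)^2 + Real.cos (θ/2)^2 = 1 := Real.sin_sq_add_cos_sq _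
  refine ⟨Real.cos (θ/2), Real.sin (θ/2), by linarith, ?_, ?_⟩
  · have := Real.cos_two_mul (θ/2)
    rw [show 2*(θ/2) = θ by ring, hcos] at this
    nlinarith [this, hpyth]
  · have := Real.sin_two_mul (θ/2)
    rw [show 2*(θ/2) = θ by ring, hsin] at this
    linarith [this]

lemma core (h h' y : ℍ[ℝ]) (hh : h.re = 0) (hh'r : h'.re = 0) (hy : y.re = 0)
    (hhn : ‖h‖ = 1) (hh'n : ‖h'‖ = 1) (hyn : ‖y‖ = 1) (hin : ⟪y,h⟫ = ⟪h',h⟫) :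
    ∃ s : ℍ[ℝ], ‖s‖ = 1 ∧ s * h * star s = h ∧ s * h' * star s = y := by
  have hh2 : h * h = -1 := mul_self_pure h hh hhn
  have hhh : ⟪h,h⟫ = 1 := by rw [real_inner_self_eq_norm_sq, hhn]; norm_num
  set c := (⟪h',h⟫ : ℝ) with hc
  set p := h' - c • h with hp
  set p' := y - c • h with hp'
  have hpre : p.re = 0 := by simp [hp, hh'r, Quaternion.re_smul, hh]
  have hp're : p'.re = 0 := by simp [hp', hy, Quaternion.re_smul, hh]
  have hph : ⟪p,h⟫ = 0 := by
    rw [hp, inner_sub_left, real_inner_smul_left, hhh]; ring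
  have hp'h : ⟪p',h⟫ = 0 := by
    rw [hp', inner_sub_left, real_inner_smul_left, hhh, hin]; ring
  have hpn : ‖p‖^2 = 1 - c^2 := by
    rw [hp, norm_sub_sq_real, real_inner_smul_right, hh'n, norm_smul, hhn,
      Real.norm_eq_abs, mul_one]
    rw [sq_abs]; ring
  have hp'n : ‖p'‖^2 = 1 - c^2 := by
    rw [hp', norm_sub_sq_real, real_inner_smul_right, hyn, norm_smul, hhn,
      Real.norm_eq_abs, mul_one]
    rw [sq_abs, hin]; ring
  by_cases hp0 : p = 0
  · have hc2 : c^2 = 1 := by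
      rw [hp0] at hpn; simp at hpn; linarith
    have hp'0 : p' = 0 := by
      have h0 : ‖p'‖^2 = 0 := by rw [hp'n, hc2]; ring
      have := pow_eq_zero_iff (n := 2) (by norm_num) |>.mp h0
      exact norm_eq_zero.mp this
    have hy' : y = h' := by
      have e1 : h' = c • h := by rwa [hp, sub_eq_zero] at hp0
      have e2 : y = c • h := by rwa [hp', sub_eq_zero] at hp'0
      rw [e1, e2]
    exact ⟨1, by simp, by simp, by simp [hy']⟩
  · have hc2 : 1 - c^2 ≠ 0 := by
      intro hcon
      apply hp0
      have h0 : ‖p‖^2 = 0 := by rw [hpn, hcon]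
      have := pow_eq_zero_iff (n := 2) (by norm_num) |>.mp h0
      exact norm_eq_zero.mp this
    have e1 : p * h = -(h * p) := by
      have h0 := pure_anticomm p h hpre hh
      rw [hph] at h0
      have h1 : p*h + h*p = 0 := by
        rw [h0, show (-2:ℝ)*0 = 0 by ring, Quaternion.coe_zero]
      exact eq_neg_of_add_eq_zero_left h1
    have e2 : p' * h = -(h * p') := by
      have h0 := pure_anticomm p' h hp're hh
      rw [hp'h] at h0
      have h1 : p'*h + h*p' = 0 := by
        rw [h0, show (-2:ℝ)*0 = 0 by ring, Quaternion.coe_zero]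
      exact eq_neg_of_add_eq_zero_left h1
    have hsp : star p = -p := Quaternion.star_eq_neg.mpr hpre
    set w := p' * star p with hwdef
    have hwh : w * h = h * w := by
      rw [hwdef, hsp]
      calc p' * -p * h = -(p' * (p * h)) := by rw [mul_neg, neg_mul, mul_assoc]
        _ = p' * (h * p) := by rw [e1, mul_neg, neg_neg]
        _ = (p' * h) * p := by rw [mul_assoc]
        _ = -(h * (p' * p)) := by rw [e2, neg_mul, mul_assoc]
        _ = h * (p' * -p) := by rw [mul_neg, mul_neg]
    obtain ⟨a0, b0, hab0⟩ := commutant h w hh hhn hh2 hwh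
    have hppn : star p * p = ((1 - c^2 : ℝ) : ℍ[ℝ]) := by
      rw [Quaternion.star_mul_self]
      congr 1
      rw [Quaternion.normSq_eq_norm_mul_self, ← sq, hpn]
    have key : (1-c^2) • p' = a0 • p + b0 • (h*p) := by
      have hk : w * p = p' * ((1 - c^2 : ℝ) : ℍ[ℝ]) := by
        rw [hwdef, mul_assoc, hppn]
      rw [Quaternion.mul_coe_eq_smul] at hk
      rw [← hk, hab0]
      simp [add_mul, smul_mul_assoc, one_mul]
    have hp'eq : p' = (a0/(1-c^2)) • p + (b0/(1-c^2)) • (h*p) := by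
      have := congrArg (fun x : ℍ[ℝ] => (1-c^2)⁻¹ • x) key
      simp only [smul_smul, smul_add] at this
      rw [inv_mul_cancel₀ hc2, one_smul] at this
      rw [this]
      congr 1 <;> congr 1 <;> field_simp
    set α := a0/(1-c^2) with hα
    set β := b0/(1-c^2) with hβ
    have hpp : p * p = -((1 - c^2 : ℝ) : ℍ[ℝ]) := by
      have := hppn
      rwa [hsp, neg_mul, neg_eq_iff_eq_neg] at this
    have hphp : ⟪p, h*p⟫ = 0 := by
      rw [Quaternion.inner_def]
      have hst : star (h*p) = p * h := by
        rw [StarMul.star_mul, hsp, Quaternion.star_eq_neg.mpr hh, neg_mul_neg]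
      rw [hst, ← mul_assoc, mul_assoc p p h, ← mul_assoc, hpp, neg_mul,
        Quaternion.coe_mul_eq_smul]
      simp [Quaternion.re_smul, hh]
    have hhpn : ‖h*p‖^2 = 1 - c^2 := by
      rw [norm_mul, hhn, one_mul, hpn]
    have habn : α^2 + β^2 = 1 := by
      have hexp := norm_add_sq_real (α • p) (β • (h*p))
      rw [← hp'eq, hp'n, real_inner_smul_left, real_inner_smul_right, hphp,
        norm_smul, norm_smul, Real.norm_eq_abs, Real.norm_eq_abs,
        mul_pow, mul_pow, sq_abs, sq_abs, hpn, hhpn] at hexp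
      have h0 : (α^2 + β^2 - 1) * (1-c^2) = 0 := by linear_combination -hexp
      rcases mul_eq_zero.mp h0 with h'|h'
      · linarith
      · exact absurd h' hc2
    obtain ⟨a, b, hab1, hab2, hab3⟩ := half_angle α β habn
    set s := a • (1:ℍ[ℝ]) + b • h with hs
    have h1h : ⟪(1:ℍ[ℝ]), h⟫ = 0 := by
      simp [Quaternion.inner_def, Quaternion.star_eq_neg.mpr hh, hh]
    have h11 : ⟪(1:ℍ[ℝ]), (1:ℍ[ℝ])⟫ = 1 := by
      rw [real_inner_self_eq_norm_sq, norm_one]; norm_num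
    have hh1 : ⟪h, (1:ℍ[ℝ])⟫ = 0 := by rw [real_inner_comm]; exact h1h
    have hsn : ‖s‖ = 1 := by
      have hsq : ‖s‖^2 = 1 := by
        rw [← real_inner_self_eq_norm_sq, hs]
        rw [inner_add_left, inner_add_right, inner_add_right,
          real_inner_smul_left, real_inner_smul_left, real_inner_smul_left,
          real_inner_smul_left, real_inner_smul_right, real_inner_smul_right,
          real_inner_smul_right, real_inner_smul_right, h1h, h11, hhh, hh1]
        nlinarith [hab1]
      nlinarith [norm_nonneg s, hsq]
    have hss : s * star s = 1 := mul_star_self' s hsn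
    have hcomm : s * h = h * s := by
      simp only [hs, add_mul, mul_add, smul_mul_assoc, mul_smul_comm, one_mul, mul_one]
    have hshs : s * h * star s = h := by
      rw [hcomm, mul_assoc, hss, mul_one]
    refine ⟨s, hsn, hshs, ?_⟩
    have hrot := rot_formula h p hh hh2 e1 a b
    rw [← hs, hab2, hab3, ← hp'eq] at hrot
    have hh'dec : h' = c • h + p := by rw [hp]; abel
    have hydec : y = c • h + p' := by rw [hp']; abel
    rw [hh'dec, hydec, mul_add, add_mul, hrot]
    congr 1
    rw [mul_smul_comm, smul_mul_assoc, hshs]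

end FibreCircleAux

open FibreCircleAux Quaternion in
/-- Let `C = {q ∈ S³ : q h q* = r}` for unit pure quaternions `h, r` with `r ≠ -h`.
For any unit pure quaternion `h'` and any `q ∈ C`, one has `⟪q h' q*, r⟫ = ⟪h', h⟫`;
moreover, as `q` ranges over `C`, the points `q h' q*` trace out exactly the small circle
on `S²` of centre `r` and angular radius `arccos (h · h')`. -/
theorem fibre_circle_traces_small_circle (h r h' : ℍ[ℝ])
    (hh : h.re = 0) (hr : r.re = 0) (hh' : h'.re = 0)
    (hhn : ‖h‖ = 1) (hrn : ‖r‖ = 1) (hh'n : ‖h'‖ = 1) (hne : r ≠ -h) :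
    (∀ q : ℍ[ℝ], ‖q‖ = 1 → q * h * star q = r → ⟪q * h' * star q, r⟫ = ⟪h', h⟫) ∧
    (fun q : ℍ[ℝ] => q * h' * star q) '' {q : ℍ[ℝ] | ‖q‖ = 1 ∧ q * h * star q = r} =
      {x : ℍ[ℝ] | x.re = 0 ∧ ‖x‖ = 1 ∧ ⟪x, r⟫ = ⟪h', h⟫} := by
  have hh2 : h * h = -1 := mul_self_pure h hh hhn
  have hr2 : r * r = -1 := mul_self_pure r hr hrn
  have part1 : ∀ q : ℍ[ℝ], ‖q‖ = 1 → q * h * star q = r →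
      ⟪q * h' * star q, r⟫ = ⟪h', h⟫ := by
    intro q hq hqh
    conv_lhs => rw [← hqh]
    exact conj_inner q h' h hq
  refine ⟨part1, ?_⟩
  ext x
  simp only [Set.mem_image, Set.mem_setOf_eq]
  constructor
  · rintro ⟨q, ⟨hq, hqh⟩, rfl⟩
    refine ⟨?_, ?_, part1 q hq hqh⟩
    · rw [conj_re q h' hq, hh']
    · rw [conj_norm q h' hq, hh'n]
  · rintro ⟨hxre, hxn, hxin⟩
    set v := (1:ℍ[ℝ]) - r*h with hv
    have hv0 : v ≠ 0 := by
      intro hcon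
      apply hne
      have h1 : r * h = 1 := by
        rw [hv, sub_eq_zero] at hcon
        exact hcon.symm
      have h2 := congrArg (fun z => z * h) h1
      simp only [one_mul] at h2
      rw [mul_assoc, hh2, mul_neg_one] at h2
      exact (neg_eq_iff_eq_neg.mp h2)
    set n := ‖v‖⁻¹ with hn
    set q0 := n • v with hq0
    have hvn : ‖v‖ ≠ 0 := norm_ne_zero_iff.mpr hv0
    have hq0n : ‖q0‖ = 1 := by
      rw [hq0, norm_smul, hn, Real.norm_eq_abs, abs_of_nonneg (inv_nonneg.mpr (norm_nonneg v))]
      exact inv_mul_cancel₀ hvn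
    have hvh : v * h = r * v := by
      rw [hv, sub_mul, one_mul, mul_sub, mul_one, mul_assoc, hh2, ← mul_assoc, hr2,
        mul_neg_one, neg_one_mul, sub_neg_eq_add, sub_neg_eq_add, add_comm]
    have hq0h : q0 * h * star q0 = r := by
      rw [hq0, Quaternion.star_smul, smul_mul_assoc, smul_mul_assoc, mul_smul_comm,
        smul_smul, hvh, mul_assoc, Quaternion.self_mul_star, Quaternion.mul_coe_eq_smul,
        smul_smul]
      rw [show n * n * (normSq v) = 1 by
        rw [hn, Quaternion.normSq_eq_norm_mul_self]; field_simp]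
      exact one_smul _ _
    have hsq0 : ‖star q0‖ = 1 := by rw [Quaternion.norm_star, hq0n]
    have hq0q0 : star q0 * q0 = 1 := star_mul_self' q0 hq0n
    have hq0q0' : q0 * star q0 = 1 := mul_star_self' q0 hq0n
    have hrback : star q0 * r * star (star q0) = h := by
      rw [star_star, ← hq0h]
      calc star q0 * (q0 * h * star q0) * q0
          = (star q0 * q0) * h * (star q0 * q0) := by
            simp only [mul_assoc]
        _ = h := by rw [hq0q0]; simp
    set y := star q0 * x * star (star q0) with hy
    have hyre : y.re = 0 := by rw [hy, conj_re _ _ hsq0, hxre]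
    have hyn : ‖y‖ = 1 := by rw [hy, conj_norm _ _ hsq0, hxn]
    have hyin : ⟪y, h⟫ = ⟪h', h⟫ := by
      rw [← hxin]
      conv_lhs => rw [hy, ← hrback]
      exact conj_inner (star q0) x r hsq0
    obtain ⟨s, hsn, hsh, hsh'⟩ := core h h' y hh hh' hyre hhn hh'n hyn hyin
    refine ⟨q0 * s, ⟨?_, ?_⟩, ?_⟩
    · rw [norm_mul, hq0n, hsn]; ring
    · rw [StarMul.star_mul]
      calc q0 * s * h * (star s * star q0)
          = q0 * (s * h * star s) * star q0 := by simp only [mul_assoc]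
        _ = r := by rw [hsh, hq0h]
    · show q0 * s * h' * star (q0 * s) = x
      rw [StarMul.star_mul]
      calc q0 * s * h' * (star s * star q0)
          = q0 * (s * h' * star s) * star q0 := by simp only [mul_assoc]
        _ = q0 * y * star q0 := by rw [hsh']
        _ = (q0 * star q0) * x * (q0 * star q0) := by
            rw [hy, star_star]; simp only [mul_assoc]
        _ = x := by rw [hq0q0']; simp
end

section
/- The Radon transform of the Abel–Poisson kernel: for 0 ≤ κ < 1, the function K(ω) = (1/2)[(1−κ²)/(1 − 2κ cos(ω/2) + κ²)² + (1−κ²)/(1 + 2κ cos(ω/2) + κ²)²] on S³ (radially symmetric in the rotation angle ω) has one-dimensional great-circle means given by R K(η) = (1 − κ⁴)/(1 − 2κ² cos η + κ⁴)^{3/2}, where cos η = q h q* · r for the great circle C_{h,r}; equivalently, the mean of K(2 arccos(cos(η/2) cos t)) over t ∈ [0, 2π) equals (1 − κ⁴)/(1 − 2κ² cos η + κ⁴)^{3/2}. -/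
open scoped Real

lemma radon_key (a b : ℝ) (hb : |b| < a) :
    ∫ t in (0:ℝ)..(2*π), ((a + b * Real.cos t)^2)⁻¹
      = 2 * π * a / (a^2 - b^2)^((3:ℝ)/2) := by
  have ha : 0 < a := lt_of_le_of_lt (abs_nonneg b) hb
  have hb2 : b^2 < a^2 := by nlinarith [abs_nonneg b, sq_abs b]
  have hD : 0 < a^2 - b^2 := by linarith
  set s : ℝ := Real.sqrt (a^2 - b^2) with hs_def
  have hs_pos : 0 < s := Real.sqrt_pos.mpr hD
  have hs2 : s^2 = a^2 - b^2 := Real.sq_sqrt hD.le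
  have he : ∀ t : ℝ, 0 < a + b * Real.cos t := by
    intro t
    have h1 : |b * Real.cos t| ≤ |b| := by
      rw [abs_mul]
      nlinarith [Real.abs_cos_le_one t, abs_nonneg b]
    have := abs_le.mp h1
    linarith
  set F : ℝ → ℝ := fun t =>
    (a/((a^2-b^2)*s)) * (t - 2 * Real.arctan (b * Real.sin t/(a + s + b * Real.cos t)))
      - b * Real.sin t/((a^2-b^2)*(a + b * Real.cos t)) with hF_def
  have hderiv : ∀ t : ℝ, HasDerivAt F ((a + b * Real.cos t)^2)⁻¹ t := by
    intro t
    have hd_pos : 0 < a + s + b * Real.cos t := by have := he t; linarith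
    have hd_ne : a + s + b * Real.cos t ≠ 0 := hd_pos.ne'
    have he_ne : a + b * Real.cos t ≠ 0 := (he t).ne'
    -- derivative of inner denominator
    have hden : HasDerivAt (fun t => a + s + b * Real.cos t) (b * (-Real.sin t)) t := by
      simpa using (((Real.hasDerivAt_cos t).const_mul b).const_add (a + s))
    have hnum : HasDerivAt (fun t => b * Real.sin t) (b * Real.cos t) t :=
      (Real.hasDerivAt_sin t).const_mul b
    have hu : HasDerivAt (fun t => b * Real.sin t/(a + s + b * Real.cos t))
        ((b * Real.cos t * (a + s + b * Real.cos t) - b * Real.sin t * (b * (-Real.sin t)))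
          / (a + s + b * Real.cos t)^2) t := hnum.div hden hd_ne
    have harc := hu.arctan
    have hH : HasDerivAt (fun t =>
        (a/((a^2-b^2)*s)) * (t - 2 * Real.arctan (b * Real.sin t/(a + s + b * Real.cos t))))
        ((a/((a^2-b^2)*s)) * (1 - 2 * (1 / (1 + (b * Real.sin t/(a + s + b * Real.cos t))^2) *
          ((b * Real.cos t * (a + s + b * Real.cos t) - b * Real.sin t * (b * (-Real.sin t)))
            / (a + s + b * Real.cos t)^2)))) t :=
      ((hasDerivAt_id t).sub (harc.const_mul 2)).const_mul _
    have hden2 : HasDerivAt (fun t => (a^2-b^2)*(a + b * Real.cos t))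
        ((a^2-b^2) * (b * (-Real.sin t))) t := by
      simpa using (((Real.hasDerivAt_cos t).const_mul b).const_add a).const_mul (a^2-b^2)
    have hden2_ne : (a^2-b^2)*(a + b * Real.cos t) ≠ 0 := mul_ne_zero hD.ne' he_ne
    have hG : HasDerivAt (fun t => b * Real.sin t/((a^2-b^2)*(a + b * Real.cos t)))
        ((b * Real.cos t * ((a^2-b^2)*(a + b * Real.cos t)) -
          b * Real.sin t * ((a^2-b^2) * (b * (-Real.sin t))))
          / ((a^2-b^2)*(a + b * Real.cos t))^2) t := hnum.div hden2 hden2_ne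
    have := hH.sub hG
    refine HasDerivAt.congr_deriv this (Eq.symm ?_)
    have hpy : Real.sin t^2 + Real.cos t^2 = 1 := Real.sin_sq_add_cos_sq t
    set c := Real.cos t
    set sn := Real.sin t
    -- key algebraic simplifications
    have h1 : 1 + (b * sn/(a + s + b * c))^2
        = 2*(a+s)*(a+b*c) / (a + s + b*c)^2 := by
      field_simp
      ring_nf
      nlinarith [hs2, hpy]
    have has : (0:ℝ) < a + s := by linarith
    have h2 : (b * c * (a + s + b * c) - b * sn * (b * -sn)) = b*c*(a+s) + b^2 := by
      linear_combination b^2 * hpy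
    have h3 : 1 / (1 + (b*sn/(a+s+b*c))^2) *
        ((b * c * (a + s + b * c) - b * sn * (b * -sn))/(a+s+b*c)^2)
        = (b*c*(a+s)+b^2)/(2*(a+s)*(a+b*c)) := by
      rw [h1, h2]
      field_simp
    have h4a : 1 - 2 * ((b*c*(a+s)+b^2)/(2*(a+s)*(a+b*c))) = s/(a+b*c) := by
      rw [eq_div_iff he_ne]
      field_simp
      linear_combination (-1 : ℝ) * hs2
    have h4 : a/((a^2-b^2)*s) * (1 - 2 * ((b*c*(a+s)+b^2)/(2*(a+s)*(a+b*c))))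
        = a/((a^2-b^2)*(a+b*c)) := by
      rw [h4a]
      field_simp
    have h5 : (b * c * ((a^2-b^2)*(a+b*c)) - b * sn * ((a^2-b^2) * (b * -sn)))
          / ((a^2-b^2)*(a+b*c))^2
        = (a*(a+b*c) - (a^2-b^2))/((a^2-b^2)*(a+b*c)^2) := by
      rw [div_eq_div_iff (by positivity) (by positivity)]
      linear_combination ((a^2-b^2)^2*(a+b*c)^2*b^2) * hpy
    rw [h3, h4, h5]
    field_simp
    ring
  have hcont : Continuous fun t : ℝ => ((a + b * Real.cos t)^2)⁻¹ := by
    refine Continuous.inv₀ (by continuity) ?_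
    intro t
    exact pow_ne_zero 2 (he t).ne'
  have hint := intervalIntegral.integral_eq_sub_of_hasDerivAt (a := (0:ℝ)) (b := 2*π)
    (fun t _ => hderiv t) (hcont.intervalIntegrable 0 (2*π))
  rw [hint]
  have hF0 : F 0 = 0 := by
    simp [hF_def]
  have hF2π : F (2*π) = a/((a^2-b^2)*s) * (2*π) := by
    simp [hF_def, Real.sin_two_pi, Real.cos_two_pi]
  rw [hF0, hF2π]
  have hr : (a^2-b^2)^((3:ℝ)/2) = (a^2-b^2) * s := by
    rw [hs_def, Real.sqrt_eq_rpow, show (3:ℝ)/2 = 1 + 1/2 by norm_num,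
      Real.rpow_add hD, Real.rpow_one]
  rw [hr]
  field_simp
  ring

/-- The great-circle Radon transform of the Abel–Poisson kernel
`K(ω) = (1/2)[(1-κ²)/(1-2κcos(ω/2)+κ²)² + (1-κ²)/(1+2κcos(ω/2)+κ²)²]`: on the great
circle `C_{h,r}` with angle `η` (where `Sc(q(t)) = cos(η/2) cos t`, so `ω(t) =
2 arccos(cos(η/2) cos t)`), the mean of `K` equals
`(1-κ⁴)/(1-2κ² cos η + κ⁴)^{3/2}`. -/
theorem radon_abel_poisson (κ : ℝ) (hκ0 : 0 ≤ κ) (hκ1 : κ < 1)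
    (η : ℝ) (hη : η ∈ Set.Icc 0 π) :
    (1 / (2 * π)) * ∫ t in (0:ℝ)..(2 * π),
        (1 / 2) *
          ((1 - κ ^ 2) /
              (1 - 2 * κ * Real.cos (2 * Real.arccos (Real.cos (η / 2) * Real.cos t) / 2)
                + κ ^ 2) ^ 2 +
            (1 - κ ^ 2) /
              (1 + 2 * κ * Real.cos (2 * Real.arccos (Real.cos (η / 2) * Real.cos t) / 2)
                + κ ^ 2) ^ 2) =
      (1 - κ ^ 4) / (1 - 2 * κ ^ 2 * Real.cos η + κ ^ 4) ^ ((3 : ℝ) / 2) := by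
  set cη := Real.cos (η / 2) with hc_def
  have hcos : ∀ t : ℝ, Real.cos (2 * Real.arccos (cη * Real.cos t) / 2) = cη * Real.cos t := by
    intro t
    rw [show (2:ℝ) * Real.arccos (cη * Real.cos t) / 2 = Real.arccos (cη * Real.cos t) by ring]
    have habs : |cη * Real.cos t| ≤ 1 := by
      rw [abs_mul]
      exact mul_le_one₀ (Real.abs_cos_le_one _) (abs_nonneg _) (Real.abs_cos_le_one _)
    obtain ⟨h1, h2⟩ := abs_le.mp habs
    exact Real.cos_arccos h1 h2
  simp only [hcos]
  set a : ℝ := 1 + κ ^ 2 with ha_def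
  set b : ℝ := 2 * κ * cη with hb_def
  have hb : |b| < a := by
    have h1 : |b| = 2 * κ * |cη| := by
      rw [hb_def, abs_mul, abs_of_nonneg (by positivity : (0:ℝ) ≤ 2 * κ)]
    have h2 : |cη| ≤ 1 := Real.abs_cos_le_one _
    nlinarith [abs_nonneg cη, sq_nonneg (1 - κ)]
  have hb' : |(-b)| < a := by rwa [abs_neg]
  have hEq : Set.EqOn
      (fun t => (1 / 2) *
          ((1 - κ ^ 2) / (1 - 2 * κ * (cη * Real.cos t) + κ ^ 2) ^ 2 +
            (1 - κ ^ 2) / (1 + 2 * κ * (cη * Real.cos t) + κ ^ 2) ^ 2))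
      (fun t => (1 - κ ^ 2) / 2 * ((a + (-b) * Real.cos t) ^ 2)⁻¹ +
        (1 - κ ^ 2) / 2 * ((a + b * Real.cos t) ^ 2)⁻¹)
      (Set.uIcc 0 (2 * π)) := by
    intro t _
    have e1 : 1 - 2 * κ * (cη * Real.cos t) + κ ^ 2 = a + (-b) * Real.cos t := by
      rw [ha_def, hb_def]; ring
    have e2 : 1 + 2 * κ * (cη * Real.cos t) + κ ^ 2 = a + b * Real.cos t := by
      rw [ha_def, hb_def]; ring
    simp only [e1, e2]
    ring
  rw [intervalIntegral.integral_congr hEq]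
  have hcont : ∀ b' : ℝ, |b'| < a → Continuous fun t : ℝ => ((a + b' * Real.cos t) ^ 2)⁻¹ := by
    intro b' hb'
    refine Continuous.inv₀ (by continuity) ?_
    intro t
    have h1 : |b' * Real.cos t| ≤ |b'| := by
      rw [abs_mul]
      nlinarith [Real.abs_cos_le_one t, abs_nonneg b']
    have := abs_le.mp h1
    refine pow_ne_zero 2 (by linarith : (0:ℝ) < a + b' * Real.cos t).ne'
  rw [intervalIntegral.integral_add
      (((hcont _ hb').intervalIntegrable 0 (2 * π)).const_mul _)
      (((hcont _ hb).intervalIntegrable 0 (2 * π)).const_mul _),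
    intervalIntegral.integral_const_mul, intervalIntegral.integral_const_mul,
    radon_key a (-b) hb', radon_key a b hb]
  have hbsq : a ^ 2 - (-b) ^ 2 = a ^ 2 - b ^ 2 := by ring
  rw [hbsq]
  have hcsq := Real.cos_sq (η / 2)
  rw [show 2 * (η / 2) = η by ring] at hcsq
  have hDeq : a ^ 2 - b ^ 2 = 1 - 2 * κ ^ 2 * Real.cos η + κ ^ 4 := by
    rw [ha_def, hb_def]
    linear_combination (-(4 * κ ^ 2)) * hcsq
  rw [hDeq]
  have hDpos : (0:ℝ) < 1 - 2 * κ ^ 2 * Real.cos η + κ ^ 4 := by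
    rw [← hDeq]
    nlinarith [abs_nonneg b, sq_abs b]
  have hD3 : (0:ℝ) < (1 - 2 * κ ^ 2 * Real.cos η + κ ^ 4) ^ ((3:ℝ)/2) :=
    Real.rpow_pos_of_pos hDpos _
  field_simp
  ring
end

section
/- The Radon transform of the de la Vallée Poussin kernel: for κ > 0, let K(ω) = (B(3/2, 1/2)/B(3/2, κ + 1/2)) · cos^{2κ}(ω/2). Then its great-circle mean over the circle C_{h,r} at distance parameter η (with Sc(q(t)) = cos(η/2) cos t) equals (1 + κ) cos^{2κ}(η/2); equivalently, (1/(2π)) ∫₀^{2π} (B(3/2,1/2)/B(3/2,κ+1/2)) (cos(η/2) cos t)^{2κ} dt = (1 + κ) cos^{2κ}(η/2) for κ a positive integer (so the integrand is well-defined). -/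
open scoped Real

/-- The real Beta function. -/
noncomputable def realBeta (a b : ℝ) : ℝ := Real.Gamma a * Real.Gamma b / Real.Gamma (a + b)

lemma realBeta_pos (κ : ℕ) : 0 < realBeta (3/2) ((κ:ℝ) + 1/2) := by
  unfold realBeta
  have h1 : (0:ℝ) < 3/2 := by norm_num
  have h2 : (0:ℝ) < (κ:ℝ) + 1/2 := by positivity
  have h3 : (0:ℝ) < 3/2 + ((κ:ℝ) + 1/2) := by positivity
  exact div_pos (mul_pos (Real.Gamma_pos_of_pos h1) (Real.Gamma_pos_of_pos h2))
    (Real.Gamma_pos_of_pos h3)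

lemma beta_step (κ : ℕ) :
    realBeta (3/2) ((κ:ℝ) + 1 + 1/2) = (((κ:ℝ) + 1/2) / ((κ:ℝ) + 2)) * realBeta (3/2) ((κ:ℝ) + 1/2) := by
  unfold realBeta
  have h2 : (3/2 + ((κ:ℝ) + 1 + 1/2)) = ((κ:ℝ) + 2) + 1 := by ring
  have h1 : ((κ:ℝ) + 1 + 1/2) = ((κ:ℝ) + 1/2) + 1 := by ring
  have h3 : (3/2 + ((κ:ℝ) + 1/2)) = (κ:ℝ) + 2 := by ring
  rw [h2, h1, h3, Real.Gamma_add_one (by positivity : ((κ:ℝ) + 1/2) ≠ 0),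
    Real.Gamma_add_one (by positivity : ((κ:ℝ) + 2) ≠ 0)]
  have hG : Real.Gamma ((κ:ℝ) + 2) ≠ 0 :=
    (Real.Gamma_pos_of_pos (by positivity)).ne'
  field_simp

lemma cos_pow_int (κ : ℕ) :
    (∫ t in (0:ℝ)..(2*π), Real.cos t ^ (2*κ)) * realBeta (3/2) (1/2)
      = 2 * π * (1 + (κ:ℝ)) * realBeta (3/2) ((κ:ℝ) + 1/2) := by
  induction κ with
  | zero => norm_num
  | succ κ ih =>
      have hstep : (∫ t in (0:ℝ)..(2*π), Real.cos t ^ (2*(κ+1)))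
          = ((2*(κ:ℝ)) + 1) / ((2*(κ:ℝ)) + 2) * ∫ t in (0:ℝ)..(2*π), Real.cos t ^ (2*κ) := by
        have h : 2*(κ+1) = 2*κ + 2 := by ring
        rw [h, integral_cos_pow]
        simp [Real.sin_two_pi]
      push_cast
      rw [hstep, beta_step, mul_assoc, ih]
      set B := realBeta (3/2) ((κ:ℝ) + 1/2) with hBdef
      have hk2 : ((2*(κ:ℝ)) + 2) ≠ 0 := by positivity
      have hk3 : ((κ:ℝ) + 2) ≠ 0 := by positivity
      field_simp
      ring

/-- The great-circle Radon transform of the de la Vallée Poussin kernel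
`K(ω) = (B(3/2,1/2)/B(3/2,κ+1/2)) cos^{2κ}(ω/2)`: on the great circle `C_{h,r}` at angle
`η` (where `Sc(q(t)) = cos(η/2) cos t`, hence `cos(ω(t)/2) = cos(η/2) cos t`), the mean
of `K` equals `(1+κ) cos^{2κ}(η/2)`, for `κ` a positive integer. -/
theorem radon_de_la_vallee_poussin (κ : ℕ) (hκ : 1 ≤ κ) (η : ℝ) (hη : η ∈ Set.Icc 0 π) :
    (1 / (2 * π)) * ∫ t in (0:ℝ)..(2 * π),
        (realBeta (3/2) (1/2) / realBeta (3/2) (κ + 1/2)) *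
          (Real.cos (η / 2) * Real.cos t) ^ (2 * κ) =
      (1 + (κ : ℝ)) * Real.cos (η / 2) ^ (2 * κ) := by
  have hrw : ∀ t : ℝ,
      (realBeta (3/2) (1/2) / realBeta (3/2) (κ + 1/2)) *
          (Real.cos (η / 2) * Real.cos t) ^ (2 * κ)
        = (realBeta (3/2) (1/2) / realBeta (3/2) (κ + 1/2) * Real.cos (η / 2) ^ (2 * κ)) *
            Real.cos t ^ (2 * κ) := by
    intro t; rw [mul_pow]; ring
  rw [intervalIntegral.integral_congr (fun t _ => hrw t),
    intervalIntegral.integral_const_mul]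
  have key := cos_pow_int κ
  have hB := realBeta_pos κ
  have hB0 : 0 < realBeta (3/2) ((0:ℕ) + 1/2) := realBeta_pos 0
  simp only [Nat.cast_zero, zero_add] at hB0
  have hI : (∫ t in (0:ℝ)..(2*π), Real.cos t ^ (2*κ))
      = 2 * π * (1 + (κ:ℝ)) * realBeta (3/2) ((κ:ℝ) + 1/2) / realBeta (3/2) (1/2) := by
    rw [eq_div_iff hB0.ne']; exact key
  rw [hI]
  set B := realBeta (3/2) ((κ:ℝ) + 1/2) with hBdef
  set B0 := realBeta (3/2) (1/2) with hB0def
  have hπ : (π:ℝ) ≠ 0 := Real.pi_ne_zero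
  field_simp
end
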